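/- In a T-algebra A of rank r, the face of the closed homogeneous cone cl C(A) exposed by e_r, namely cl C(A) ∩ {e_r}^⊥, equals the closed homogeneous cone of the principal subalgebra A_{{r}} obtained by deleting the r-th row and column. -/

import Mathlib

/-- A T-algebra of rank `r` in the sense of Vinberg: a bigraded algebra
`A = ⊕_{i,j} A_{ij}` with involution `conj`, satisfying axioms (a1)–(a7).
`c a i j` denotes the `(i,j)` component of `a`, `e i` the unit of `A_{ii} ≅ ℝ`, and
`ρ i a` the real coordinate of the `(i,i)` component of `a`; the trace is
`tr a = ∑ i, ρ i a` and the inner product is `⟨a,b⟩ = tr (a b*)`. -/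
structure TAlgebra (A : Type*) [AddCommGroup A] [Module ℝ A] (r : ℕ) where
  mul : A →ₗ[ℝ] A →ₗ[ℝ] A
  conj : A →ₗ[ℝ] A
  S : Fin r → Fin r → Submodule ℝ A
  c : A → Fin r → Fin r → A
  e : Fin r → A
  ρ : Fin r → A → ℝ
  -- the bigradation
  c_mem : ∀ a i j, c a i j ∈ S i j
  c_sum : ∀ a, (∑ i, ∑ j, c a i j) = a
  c_unique : ∀ (a : A) (f : Fin r → Fin r → A), (∀ i j, f i j ∈ S i j) →
    (∑ i, ∑ j, f i j) = a → ∀ i j, c a i j = f i j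
  grade_mul : ∀ i j k : Fin r, ∀ x ∈ S i j, ∀ y ∈ S j k, mul x y ∈ S i k
  grade_mul_zero : ∀ i j k l : Fin r, j ≠ k → ∀ x ∈ S i j, ∀ y ∈ S k l, mul x y = 0
  -- the involution
  conj_conj : ∀ a, conj (conj a) = a
  conj_mul : ∀ a b, conj (mul a b) = mul (conj b) (conj a)
  conj_grade : ∀ i j : Fin r, ∀ x ∈ S i j, conj x ∈ S j i
  -- (a1): each `A_{ii}` is a subalgebra isomorphic to `ℝ`, with unit `e i`
  e_mem : ∀ i, e i ∈ S i i
  conj_e : ∀ i, conj (e i) = e i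
  e_ne : ∀ i, e i ≠ 0
  diag_coord : ∀ a i, c a i i = ρ i a • e i
  ρ_e : ∀ i, ρ i (e i) = 1
  e_idem : ∀ i, mul (e i) (e i) = e i
  -- (a2)
  e_mul : ∀ a (i j : Fin r), mul (e i) (c a i j) = c a i j
  mul_e : ∀ a (i j : Fin r), mul (c a j i) (e i) = c a j i
  -- (a3)
  tr_comm : ∀ a b, (∑ i, ρ i (mul a b)) = ∑ i, ρ i (mul b a)
  -- (a4)
  tr_assoc : ∀ a b d, (∑ i, ρ i (mul (mul a b) d)) = ∑ i, ρ i (mul a (mul b d))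
  -- (a5)
  tr_nonneg : ∀ a, 0 ≤ ∑ i, ρ i (mul a (conj a))
  tr_pos : ∀ a, (∑ i, ρ i (mul a (conj a))) = 0 → a = 0
  -- (a6)
  assoc6 : ∀ i j k l : Fin r, i ≤ j → j ≤ k → k ≤ l →
    ∀ x ∈ S i j, ∀ y ∈ S j k, ∀ z ∈ S k l, mul x (mul y z) = mul (mul x y) z
  -- (a7)
  assoc7 : ∀ i j k l : Fin r, i ≤ j → j ≤ k → l ≤ k →
    ∀ x ∈ S i j, ∀ y ∈ S j k, ∀ z ∈ S l k,
      mul x (mul y (conj z)) = mul (mul x y) (conj z)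

namespace TAlgebra

variable {A : Type*} [AddCommGroup A] [Module ℝ A] {r : ℕ} (T : TAlgebra A r)

/-- `t` is upper triangular: all components `t_{ij}` with `j < i` vanish. -/
def UpperTriangular (t : A) : Prop := ∀ i j : Fin r, j < i → T.c t i j = 0

/-- The set `T₊` of upper triangular elements with nonnegative diagonal. -/
def Tplus : Set A := {t | T.UpperTriangular t ∧ ∀ i, 0 ≤ T.ρ i t}

/-- The closed homogeneous cone `cl C(A) = {tt* : t ∈ T₊}`. -/
def clCone : Set A := {x | ∃ t ∈ T.Tplus, x = T.mul t (T.conj t)}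

/-- `t ∈ T₊` is proper if `ρ_i(t_{ii}) = 0` implies that the `i`-th column of `t`
vanishes. -/
def Proper (t : A) : Prop :=
  t ∈ T.Tplus ∧ ∀ i : Fin r, T.ρ i t = 0 → ∀ k : Fin r, T.c t k i = 0

/-- The trace of the T-algebra. -/
def tr (a : A) : ℝ := ∑ i, T.ρ i a

/-- The inner product `⟨a,b⟩ = tr (a b*)` of the T-algebra. -/
def inner' (a b : A) : ℝ := T.tr (T.mul a (T.conj b))


section Basic
variable {a b z : A} {i j k l p q : Fin r}

lemma c_zero (i j : Fin r) : T.c 0 i j = 0 := by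
  have := T.c_unique 0 (fun _ _ => 0) (fun _ _ => Submodule.zero_mem _) (by simp) i j
  simpa using this

lemma c_add (a b : A) (i j : Fin r) : T.c (a + b) i j = T.c a i j + T.c b i j := by
  have := T.c_unique (a + b) (fun i j => T.c a i j + T.c b i j)
    (fun i j => Submodule.add_mem _ (T.c_mem a i j) (T.c_mem b i j))
    (by simp only [Finset.sum_add_distrib, T.c_sum]) i j
  simpa using this

lemma c_smul (t : ℝ) (a : A) (i j : Fin r) : T.c (t • a) i j = t • T.c a i j := by
  have := T.c_unique (t • a) (fun i j => t • T.c a i j)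
    (fun i j => Submodule.smul_mem _ _ (T.c_mem a i j))
    (by simp only [← Finset.smul_sum, T.c_sum]) i j
  simpa using this

lemma c_sub (a b : A) (i j : Fin r) : T.c (a - b) i j = T.c a i j - T.c b i j := by
  have h : a - b = a + (-1 : ℝ) • b := by simp [sub_eq_add_neg]
  rw [h, T.c_add, T.c_smul]; simp [sub_eq_add_neg]

lemma eq_of_c_eq {a b : A} (h : ∀ i j, T.c a i j = T.c b i j) : a = b := by
  rw [← T.c_sum a, ← T.c_sum b]
  exact Finset.sum_congr rfl fun i _ => Finset.sum_congr rfl fun j _ => h i j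

lemma eq_zero_of_c {a : A} (h : ∀ i j, T.c a i j = 0) : a = 0 :=
  T.eq_of_c_eq (fun i j => by rw [h, T.c_zero])

lemma c_of_mem {a : A} (h : a ∈ T.S i j) (k l : Fin r) :
    T.c a k l = if k = i then (if l = j then a else 0) else 0 := by
  refine T.c_unique a (fun k l => if k = i then (if l = j then a else 0) else 0)
    (fun k l => ?_) ?_ k l
  · split_ifs with h1 h2
    · subst h1; subst h2; exact h
    · exact Submodule.zero_mem _
    · exact Submodule.zero_mem _
  · have hrow : ∀ k : Fin r, (∑ l, if k = i then (if l = j then a else 0) else 0)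
        = if k = i then a else 0 := by
      intro k
      by_cases hk : k = i
      · subst hk; simp [Finset.sum_ite_eq']
      · simp [hk]
    simp only [hrow, Finset.sum_ite_eq', Finset.mem_univ, if_true]

lemma c_of_mem_self {a : A} (h : a ∈ T.S i j) : T.c a i j = a := by
  rw [T.c_of_mem h]; simp

lemma c_of_mem_ne {a : A} (h : a ∈ T.S i j) (hkl : k ≠ i ∨ l ≠ j) :
    T.c a k l = 0 := by
  rw [T.c_of_mem h]
  rcases hkl with h1 | h1
  · simp [h1]
  · split_ifs <;> simp_all

lemma c_conj (a : A) (i j : Fin r) : T.c (T.conj a) i j = T.conj (T.c a j i) := by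
  refine T.c_unique (T.conj a) (fun i j => T.conj (T.c a j i))
    (fun i j => T.conj_grade j i _ (T.c_mem a j i)) ?_ i j
  rw [Finset.sum_comm]
  rw [show (∑ j : Fin r, ∑ i : Fin r, T.conj (T.c a j i)) =
    T.conj (∑ j : Fin r, ∑ i : Fin r, T.c a j i) by simp [map_sum], T.c_sum]

lemma c_mul (a b : A) (i k : Fin r) :
    T.c (T.mul a b) i k = ∑ j, T.mul (T.c a i j) (T.c b j k) := by
  refine T.c_unique (T.mul a b) (fun i k => ∑ j, T.mul (T.c a i j) (T.c b j k))
    (fun i k => Submodule.sum_mem _ (fun j _ =>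
      T.grade_mul i j k _ (T.c_mem a i j) _ (T.c_mem b j k))) ?_ i k
  have expand : T.mul a b = ∑ i, ∑ j, ∑ u, ∑ l, T.mul (T.c a i j) (T.c b u l) := by
    conv_lhs => rw [← T.c_sum a, ← T.c_sum b]
    rw [map_sum T.mul _ Finset.univ, LinearMap.coe_sum, Finset.sum_apply]
    refine Finset.sum_congr rfl fun i _ => ?_
    rw [map_sum T.mul _ Finset.univ, LinearMap.coe_sum, Finset.sum_apply]
    refine Finset.sum_congr rfl fun j _ => ?_
    rw [map_sum (T.mul (T.c a i j))]
    refine Finset.sum_congr rfl fun u _ => ?_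
    rw [map_sum (T.mul (T.c a i j))]
  rw [expand]
  refine Finset.sum_congr rfl fun i _ => ?_
  have h1 : ∀ j : Fin r, (∑ u, ∑ l, T.mul (T.c a i j) (T.c b u l))
      = ∑ l, T.mul (T.c a i j) (T.c b j l) := by
    intro j
    refine Finset.sum_eq_single j (fun u _ hu => Finset.sum_eq_zero fun l _ => ?_)
      (by simp)
    rw [T.grade_mul_zero i j u l hu.symm _ (T.c_mem a i j) _ (T.c_mem b u l)]
  rw [Finset.sum_congr rfl fun j _ => h1 j, Finset.sum_comm]

lemma smul_e_inj {x y : ℝ} (i : Fin r) (h : x • T.e i = y • T.e i) : x = y := by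
  by_contra hxy
  have h2 : (x - y) • T.e i = 0 := by rw [sub_smul, h, sub_self]
  rcases smul_eq_zero.mp h2 with h3 | h3
  · exact hxy (by linarith [sub_eq_zero.mp (by linarith [h3] : x - y = 0)])
  · exact T.e_ne i h3

lemma rho_add (a b : A) (i : Fin r) : T.ρ i (a + b) = T.ρ i a + T.ρ i b := by
  apply T.smul_e_inj i
  rw [← T.diag_coord, T.c_add, T.diag_coord, T.diag_coord, add_smul]

lemma rho_smul (t : ℝ) (a : A) (i : Fin r) : T.ρ i (t • a) = t * T.ρ i a := by
  apply T.smul_e_inj i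
  rw [← T.diag_coord, T.c_smul, T.diag_coord, smul_smul]

lemma rho_zero (i : Fin r) : T.ρ i (0 : A) = 0 := by
  apply T.smul_e_inj i
  rw [← T.diag_coord, T.c_zero, zero_smul]

lemma rho_eq_zero_of_c {a : A} {i : Fin r} (h : T.c a i i = 0) : T.ρ i a = 0 := by
  apply T.smul_e_inj i
  rw [← T.diag_coord, h, zero_smul]

lemma rho_conj (a : A) (i : Fin r) : T.ρ i (T.conj a) = T.ρ i a := by
  apply T.smul_e_inj i
  rw [← T.diag_coord, T.c_conj, T.diag_coord, map_smul, T.conj_e]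

lemma tr_add' (a b : A) : T.tr (a + b) = T.tr a + T.tr b := by
  simp [tr, T.rho_add, Finset.sum_add_distrib]

lemma tr_smul' (t : ℝ) (a : A) : T.tr (t • a) = t * T.tr a := by
  simp [tr, T.rho_smul, Finset.mul_sum]

lemma tr_sub' (a b : A) : T.tr (a - b) = T.tr a - T.tr b := by
  have : a - b = a + (-1 : ℝ) • b := by simp [sub_eq_add_neg]
  rw [this, T.tr_add', T.tr_smul']; ring

lemma tr_conj' (a : A) : T.tr (T.conj a) = T.tr a := by
  simp [tr, T.rho_conj]

lemma trC (a b : A) : T.tr (T.mul a b) = T.tr (T.mul b a) := T.tr_comm a b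

lemma trA (a b d : A) : T.tr (T.mul (T.mul a b) d) = T.tr (T.mul a (T.mul b d)) :=
  T.tr_assoc a b d

lemma tr_self_nonneg (a : A) : 0 ≤ T.tr (T.mul a (T.conj a)) := T.tr_nonneg a

lemma eq_zero_of_tr_self {a : A} (h : T.tr (T.mul a (T.conj a)) = 0) : a = 0 :=
  T.tr_pos a h

lemma mem_diag_eq {z : A} {i : Fin r} (h : z ∈ T.S i i) : z = T.ρ i z • T.e i := by
  rw [← T.diag_coord, T.c_of_mem_self h]

lemma rho_off {z : A} {i j : Fin r} (h : z ∈ T.S i i) (hj : j ≠ i) : T.ρ j z = 0 :=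
  T.rho_eq_zero_of_c (T.c_of_mem_ne h (Or.inl hj))

lemma sq_scalar {x : A} {i j : Fin r} (h : x ∈ T.S i j) :
    T.mul x (T.conj x) = T.tr (T.mul x (T.conj x)) • T.e i := by
  have hmem : T.mul x (T.conj x) ∈ T.S i i :=
    T.grade_mul i j i _ h _ (T.conj_grade i j _ h)
  have : T.tr (T.mul x (T.conj x)) = T.ρ i (T.mul x (T.conj x)) := by
    rw [tr, Finset.sum_eq_single i]
    · intro b _ hb; exact T.rho_off hmem hb
    · simp
  rw [this]; exact T.mem_diag_eq hmem

end Basic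

section Cols
variable {p q : Fin r}

/-- `v` is a column at position `p`: all components outside column `p`, and all
components in rows below `p`, vanish. -/
def IsCol (p : Fin r) (v : A) : Prop :=
  (∀ i j : Fin r, j ≠ p → T.c v i j = 0) ∧ (∀ i : Fin r, p < i → T.c v i p = 0)

lemma isCol_zero (p : Fin r) : T.IsCol p (0 : A) :=
  ⟨fun _ _ _ => T.c_zero _ _, fun _ _ => T.c_zero _ _⟩

lemma c_sum_pieces {f : Fin r → A} (hf : ∀ i, f i ∈ T.S i p) (i j : Fin r) :
    T.c (∑ u, f u) i j = if j = p then f i else 0 := by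
  have h : ∀ u i j, T.c (f u) i j = if i = u then (if j = p then f u else 0) else 0 :=
    fun u i j => T.c_of_mem (hf u) i j
  have hsum : T.c (∑ u, f u) i j = ∑ u, T.c (f u) i j := by
    classical
    induction (Finset.univ : Finset (Fin r)) using Finset.induction_on with
    | empty => simp [T.c_zero]
    | @insert _ _ hnot ih => rw [Finset.sum_insert hnot, Finset.sum_insert hnot, T.c_add, ih]
  rw [hsum]
  simp only [h]
  rw [Finset.sum_ite_eq Finset.univ i (fun u => if j = p then f u else 0)]
  simp

lemma c_finsum (f : Fin r → A) (i j : Fin r) :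
    T.c (∑ u, f u) i j = ∑ u, T.c (f u) i j := by
  classical
  induction (Finset.univ : Finset (Fin r)) using Finset.induction_on with
  | empty => simp [T.c_zero]
  | @insert _ _ hnot ih => rw [Finset.sum_insert hnot, Finset.sum_insert hnot, T.c_add, ih]

lemma isCol_of_pieces {f : Fin r → A} (hf : ∀ i, f i ∈ T.S i p)
    (hrow : ∀ i, p < i → f i = 0) : T.IsCol p (∑ u, f u) := by
  constructor
  · intro i j hj
    rw [T.c_sum_pieces hf, if_neg hj]
  · intro i hi
    rw [T.c_sum_pieces hf, if_pos rfl]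
    exact hrow i hi

lemma col_decomp {v : A} (h : T.IsCol p v) : v = ∑ i, T.c v i p := by
  conv_lhs => rw [← T.c_sum v]
  refine Finset.sum_congr rfl fun i _ => ?_
  rw [Finset.sum_eq_single p (fun j _ hj => h.1 i j hj) (by simp)]

lemma isCol_add {v w : A} (hv : T.IsCol p v) (hw : T.IsCol p w) : T.IsCol p (v + w) :=
  ⟨fun i j hj => by rw [T.c_add, hv.1 i j hj, hw.1 i j hj, add_zero],
   fun i hi => by rw [T.c_add, hv.2 i hi, hw.2 i hi, add_zero]⟩

lemma isCol_smul {v : A} (t : ℝ) (hv : T.IsCol p v) : T.IsCol p (t • v) :=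
  ⟨fun i j hj => by rw [T.c_smul, hv.1 i j hj, smul_zero],
   fun i hi => by rw [T.c_smul, hv.2 i hi, smul_zero]⟩

lemma isCol_sub {v w : A} (hv : T.IsCol p v) (hw : T.IsCol p w) : T.IsCol p (v - w) :=
  ⟨fun i j hj => by rw [T.c_sub, hv.1 i j hj, hw.1 i j hj, sub_zero],
   fun i hi => by rw [T.c_sub, hv.2 i hi, hw.2 i hi, sub_zero]⟩

/-- Columns at distinct positions are orthogonal: `v w* = 0`. -/
lemma col_mul_conj_col {v w : A} (hv : T.IsCol p v) (hw : T.IsCol q w) (hpq : p ≠ q) :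
    T.mul v (T.conj w) = 0 := by
  refine T.eq_zero_of_c fun i k => ?_
  rw [T.c_mul]
  refine Finset.sum_eq_zero fun j _ => ?_
  by_cases hj : j = p
  · subst hj
    rw [T.c_conj, hw.1 k _ hpq]
    simp
  · rw [hv.1 i j hj]; simp

/-- If `v` is a column at `p` and the `p`-th column of `t` vanishes then `t v* = 0`
and `v t* = 0`. -/
lemma zerocol_mul_conj_col {v t : A} (hv : T.IsCol p v) (ht : ∀ k, T.c t k p = 0) :
    T.mul t (T.conj v) = 0 := by
  refine T.eq_zero_of_c fun i k => ?_
  rw [T.c_mul]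
  refine Finset.sum_eq_zero fun j _ => ?_
  by_cases hj : j = p
  · subst hj; rw [ht i]; simp
  · rw [T.c_conj, hv.1 k j hj]; simp

lemma col_mul_conj_zerocol {v t : A} (hv : T.IsCol p v) (ht : ∀ k, T.c t k p = 0) :
    T.mul v (T.conj t) = 0 := by
  have h := T.zerocol_mul_conj_col hv ht
  have : T.conj (T.mul t (T.conj v)) = 0 := by rw [h, map_zero]
  rwa [T.conj_mul, T.conj_conj] at this

lemma mul_e_right {z : A} (h : z ∈ T.S i j) : T.mul z (T.e j) = z := by
  have := T.mul_e z j i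
  rwa [T.c_of_mem_self h] at this

lemma mul_e_left {z : A} (h : z ∈ T.S i j) : T.mul (T.e i) z = z := by
  have := T.e_mul z i j
  rwa [T.c_of_mem_self h] at this

end Cols

section Assoc
variable {m p : Fin r} {x : A}

lemma mul_sum_left (g : Fin r → A) (y : A) :
    T.mul (∑ u, g u) y = ∑ u, T.mul (g u) y := by
  rw [map_sum T.mul g Finset.univ, LinearMap.coe_sum, Finset.sum_apply]

lemma mul_sum_right (y : A) (g : Fin r → A) :
    T.mul y (∑ u, g u) = ∑ u, T.mul y (g u) := map_sum (T.mul y) g Finset.univ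

lemma conj_sum (g : Fin r → A) : T.conj (∑ u, g u) = ∑ u, T.conj (g u) :=
  map_sum T.conj g Finset.univ

lemma a7UUD (hmp : m ≤ p) (hx : x ∈ T.S m p) {i k : Fin r} (him : i ≤ m) (hkp : k ≤ p)
    {X Z : A} (hX : X ∈ T.S i m) (hZ : Z ∈ T.S k p) :
    T.mul X (T.mul x (T.conj Z)) = T.mul (T.mul X x) (T.conj Z) :=
  T.assoc7 i m p k him hmp hkp X hX x hx Z hZ

lemma a7UDD (hmp : m ≤ p) (hx : x ∈ T.S m p) {i k : Fin r} (hip : i ≤ p) (hkm : k ≤ m)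
    {V W : A} (hV : V ∈ T.S i p) (hW : W ∈ T.S k p) :
    T.mul V (T.mul (T.conj x) (T.mul x (T.conj W)))
      = T.mul (T.mul V (T.conj x)) (T.mul x (T.conj W)) := by
  have hWx : T.mul W (T.conj x) ∈ T.S k m :=
    T.grade_mul k p m _ hW _ (T.conj_grade m p _ hx)
  have h := T.a7UUD hmp hx hkm hip hWx hV
  have h2 := congrArg T.conj h
  simp only [T.conj_mul, T.conj_conj] at h2
  exact h2.symm

end Assoc

section Peel
variable {m p : Fin r} {x v : A}

/-- The key "peeling" identity:  `v v* = bsq⁻¹ (v x*)(v x*)* + w w*` where `x` is the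
lowest nonzero entry of the column `v` and `w = v - bsq⁻¹ ((v x*) x)`. -/
lemma peel_sq (hmp : m ≤ p) (hv : T.IsCol p v) (hx : x ∈ T.S m p)
    (hmax : ∀ k : Fin r, ¬ k ≤ m → T.c v k p = 0)
    {bsq : ℝ} (hbsq : bsq ≠ 0) (hxx : T.mul x (T.conj x) = bsq • T.e m) :
    T.mul v (T.conj v)
      = bsq⁻¹ • T.mul (T.mul v (T.conj x)) (T.conj (T.mul v (T.conj x)))
        + T.mul (v - bsq⁻¹ • T.mul (T.mul v (T.conj x)) x)
            (T.conj (v - bsq⁻¹ • T.mul (T.mul v (T.conj x)) x)) := by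
  set a : Fin r → A := fun i => T.c v i p with ha
  have hai : ∀ i, a i ∈ T.S i p := fun i => T.c_mem v i p
  have hvd : v = ∑ i, a i := T.col_decomp hv
  set P := T.mul v (T.conj x) with hPdef
  set Q := T.mul P x with hQdef
  have hconjP : T.conj P = T.mul x (T.conj v) := by
    rw [hPdef, T.conj_mul, T.conj_conj]
  have hconjQ : T.conj Q = T.mul (T.conj x) (T.conj P) := by
    rw [hQdef, T.conj_mul]
  -- expansions
  have hPsum : P = ∑ i, T.mul (a i) (T.conj x) := by
    rw [hPdef]; conv_lhs => rw [hvd]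
    rw [T.mul_sum_left]
  have hQsum : Q = ∑ i, T.mul (T.mul (a i) (T.conj x)) x := by
    rw [hQdef, hPsum, T.mul_sum_left]
  have hconjv : T.conj v = ∑ k, T.conj (a k) := by
    conv_lhs => rw [hvd]
    rw [T.conj_sum]
  -- bounds on indices of nonzero entries
  have hile : ∀ i : Fin r, a i ≠ 0 → i ≤ p := by
    intro i h
    by_contra hip
    exact h (hv.2 i (lt_of_not_ge hip))
  have hkle : ∀ k : Fin r, a k ≠ 0 → k ≤ m := by
    intro k h
    by_contra hkm
    exact h (hmax k hkm)
  -- I2 : Q v* = P P*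
  have hPP : T.mul P (T.conj P) = ∑ i, ∑ k,
      T.mul (T.mul (a i) (T.conj x)) (T.mul x (T.conj (a k))) := by
    rw [hconjP, hconjv, T.mul_sum_right x, hPsum, T.mul_sum_left]
    refine Finset.sum_congr rfl fun i _ => ?_
    rw [T.mul_sum_right]
  have I2 : T.mul Q (T.conj v) = T.mul P (T.conj P) := by
    rw [hPP, hconjv, hQsum, T.mul_sum_left]
    refine Finset.sum_congr rfl fun i _ => ?_
    rw [T.mul_sum_right]
    refine Finset.sum_congr rfl fun k _ => ?_
    by_cases hi0 : a i = 0
    · simp [hi0]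
    by_cases hk0 : a k = 0
    · simp [hk0]
    exact (T.a7UUD hmp hx (hkle i hi0) (hile k hk0)
      (T.grade_mul i p m _ (hai i) _ (T.conj_grade m p _ hx)) (hai k)).symm
  -- I1 : v (conj Q) = P P*
  have I1 : T.mul v (T.conj Q) = T.mul P (T.conj P) := by
    rw [hPP, hconjQ, hconjP, hconjv, T.mul_sum_right x, T.mul_sum_right (T.conj x)]
    conv_lhs => rw [hvd]
    rw [T.mul_sum_left]
    refine Finset.sum_congr rfl fun i _ => ?_
    rw [T.mul_sum_right]
    refine Finset.sum_congr rfl fun k _ => ?_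
    by_cases hi0 : a i = 0
    · simp [hi0]
    by_cases hk0 : a k = 0
    · simp [hk0]
    exact T.a7UDD hmp hx (hile i hi0) (hkle k hk0) (hai i) (hai k)
  -- I3 : Q (conj Q) = bsq • P P*
  have I3 : T.mul Q (T.conj Q) = bsq • T.mul P (T.conj P) := by
    rw [hPP, hconjQ, hconjP, hconjv, T.mul_sum_right x, T.mul_sum_right (T.conj x), hQsum,
      T.mul_sum_left, Finset.smul_sum]
    refine Finset.sum_congr rfl fun i _ => ?_
    rw [T.mul_sum_right, Finset.smul_sum]
    refine Finset.sum_congr rfl fun k _ => ?_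
    by_cases hi0 : a i = 0
    · simp [hi0]
    by_cases hk0 : a k = 0
    · simp [hk0]
    have hQi : T.mul (T.mul (a i) (T.conj x)) x ∈ T.S i p :=
      T.grade_mul i m p _ (T.grade_mul i p m _ (hai i) _ (T.conj_grade m p _ hx)) _ hx
    rw [T.a7UDD hmp hx (hile i hi0) (hkle k hk0) hQi (hai k)]
    have h2 : T.mul (T.mul (T.mul (a i) (T.conj x)) x) (T.conj x)
        = bsq • T.mul (a i) (T.conj x) := by
      rw [← T.a7UUD hmp hx (hkle i hi0) hmp
        (T.grade_mul i p m _ (hai i) _ (T.conj_grade m p _ hx)) hx, hxx, map_smul,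
        T.mul_e_right (T.grade_mul i p m _ (hai i) _ (T.conj_grade m p _ hx))]
    rw [h2, map_smul, LinearMap.smul_apply]
  -- now put it together
  have hconjw : T.conj (v - bsq⁻¹ • Q) = T.conj v - bsq⁻¹ • T.conj Q := by
    rw [map_sub, map_smul]
  rw [hconjw]
  rw [show T.mul (v - bsq⁻¹ • Q) (T.conj v - bsq⁻¹ • T.conj Q)
      = T.mul v (T.conj v) - bsq⁻¹ • T.mul v (T.conj Q) - bsq⁻¹ • T.mul Q (T.conj v)
        + (bsq⁻¹ * bsq⁻¹) • T.mul Q (T.conj Q) by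
    simp only [map_sub, map_smul, LinearMap.sub_apply, LinearMap.smul_apply,
      smul_sub, smul_smul]
    abel]
  rw [I1, I2, I3, smul_smul]
  have hco : bsq⁻¹ * bsq⁻¹ * bsq = bsq⁻¹ := by field_simp
  rw [hco]
  abel

end Peel

section PeelRec

/-- Peeling a column with zero diagonal entry into a list of columns at strictly
lower positions, preserving the square. -/
lemma peel : ∀ (M : ℕ) (p : Fin r) (v : A), T.IsCol p v → T.c v p p = 0 →
    (∀ i : Fin r, M ≤ i.val → T.c v i p = 0) →
    ∃ D : List (Fin r × A),
      (∀ qd ∈ D, T.IsCol qd.1 qd.2 ∧ qd.1 < p) ∧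
      (D.map (fun qd => 3 ^ qd.1.val)).sum < 3 ^ M ∧
      (D.map (fun qd => T.mul qd.2 (T.conj qd.2))).sum = T.mul v (T.conj v) := by
  intro M
  induction M using Nat.strong_induction_on with
  | _ M ih =>
  intro p v hv hdiag hrows
  by_cases hv0 : v = 0
  · refine ⟨[], by simp, by positivity, ?_⟩
    simp [hv0]
  classical
  set rows : Finset (Fin r) := Finset.univ.filter (fun i => T.c v i p ≠ 0) with hrowsdef
  have hne : rows.Nonempty := by
    by_contra hcon
    refine hv0 (T.eq_zero_of_c fun i j => ?_)
    by_cases hj : j = p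
    · subst hj
      by_contra hne0
      exact hcon ⟨i, Finset.mem_filter.mpr ⟨Finset.mem_univ i, hne0⟩⟩
    · exact hv.1 i j hj
  set m := rows.max' hne with hmdef
  have hmmem : T.c v m p ≠ 0 := (Finset.mem_filter.mp (rows.max'_mem hne)).2
  have hmax : ∀ k : Fin r, ¬ k ≤ m → T.c v k p = 0 := by
    intro k hk
    by_contra h0
    exact hk (rows.le_max' k (Finset.mem_filter.mpr ⟨Finset.mem_univ k, h0⟩))
  have hmp : m < p := by
    rcases lt_trichotomy m p with h | h | h
    · exact h
    · exact absurd (h ▸ hdiag) hmmem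
    · exact absurd (hv.2 m h) hmmem
  have hMm : m.val < M := by
    by_contra h
    exact hmmem (hrows m (le_of_not_gt h))
  set x := T.c v m p with hxdef
  have hx : x ∈ T.S m p := T.c_mem v m p
  set bsq := T.tr (T.mul x (T.conj x)) with hbsqdef
  have hbsq_pos : 0 < bsq := by
    rcases lt_or_eq_of_le (T.tr_self_nonneg x) with h | h
    · exact h
    · exact absurd (T.eq_zero_of_tr_self h.symm) hmmem
  have hxx : T.mul x (T.conj x) = bsq • T.e m := T.sq_scalar hx
  set a : Fin r → A := fun i => T.c v i p with hadef
  have hai : ∀ i, a i ∈ T.S i p := fun i => T.c_mem v i p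
  have hvd : v = ∑ i, a i := T.col_decomp hv
  set P := T.mul v (T.conj x) with hPdef
  set Q := T.mul P x with hQdef
  have hPsum : P = ∑ i, T.mul (a i) (T.conj x) := by
    rw [hPdef]; conv_lhs => rw [hvd]
    rw [T.mul_sum_left]
  have hQsum : Q = ∑ i, T.mul (T.mul (a i) (T.conj x)) x := by
    rw [hQdef, hPsum, T.mul_sum_left]
  have hPpiece : ∀ i, T.mul (a i) (T.conj x) ∈ T.S i m :=
    fun i => T.grade_mul i p m _ (hai i) _ (T.conj_grade m p _ hx)
  have hQpiece : ∀ i, T.mul (T.mul (a i) (T.conj x)) x ∈ T.S i p :=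
    fun i => T.grade_mul i m p _ (hPpiece i) _ hx
  have hProw : ∀ i : Fin r, m < i → T.mul (a i) (T.conj x) = 0 := by
    intro i hi
    have h0 : a i = 0 := hmax i (not_le.mpr hi)
    rw [h0]
    simp
  have hPcol : T.IsCol m P := by
    rw [hPsum]; exact T.isCol_of_pieces hPpiece hProw
  have hcQ : ∀ i j : Fin r, T.c Q i j
      = if j = p then T.mul (T.mul (a i) (T.conj x)) x else 0 := by
    intro i j
    rw [hQsum]
    exact T.c_sum_pieces hQpiece i j
  set w := v - bsq⁻¹ • Q with hwdef
  have hQm : T.mul (T.mul (a m) (T.conj x)) x = bsq • x := by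
    have ham : a m = x := rfl
    rw [ham, hxx, map_smul, LinearMap.smul_apply, T.mul_e_left hx]
  have hwcol : T.IsCol p w := by
    refine T.isCol_sub hv (T.isCol_smul _ ?_)
    rw [hQsum]
    refine T.isCol_of_pieces hQpiece ?_
    intro i hi
    have h0 : a i = 0 := hmax i (not_le.mpr (lt_trans hmp hi))
    rw [h0]
    simp
  have hwdiag : T.c w p p = 0 := by
    rw [hwdef, T.c_sub, hdiag, T.c_smul, hcQ, if_pos rfl]
    rw [show a p = T.c v p p from rfl, hdiag]
    simp
  have hwrows : ∀ i : Fin r, m.val ≤ i.val → T.c w i p = 0 := by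
    intro i hi
    rcases lt_or_eq_of_le hi with h | h
    · have him : m < i := h
      have h0 : a i = 0 := hmax i (not_le.mpr him)
      rw [hwdef, T.c_sub, T.c_smul, hcQ, if_pos rfl, h0,
        show T.c v i p = 0 from h0]
      simp
    · have him : i = m := Fin.ext h.symm
      subst him
      rw [hwdef, T.c_sub, T.c_smul, hcQ, if_pos rfl, hQm, smul_smul,
        inv_mul_cancel₀ (ne_of_gt hbsq_pos)]
      simp [← hxdef]
  obtain ⟨D', hD'col, hD'meas, hD'sq⟩ := ih m.val hMm p w hwcol hwdiag hwrows
  set β := Real.sqrt bsq with hβdef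
  have hβpos : 0 < β := Real.sqrt_pos.mpr hbsq_pos
  have hββ : β * β = bsq := Real.mul_self_sqrt hbsq_pos.le
  set d := β⁻¹ • P with hddef
  have hdcol : T.IsCol m d := T.isCol_smul _ hPcol
  have hdd : T.mul d (T.conj d) = bsq⁻¹ • T.mul P (T.conj P) := by
    rw [hddef, map_smul, LinearMap.smul_apply, map_smul, map_smul, smul_smul]
    rw [show β⁻¹ * β⁻¹ = bsq⁻¹ by rw [← hββ]; rw [mul_inv]]
  refine ⟨(m, d) :: D', ?_, ?_, ?_⟩
  · rintro qd hqd
    rcases List.mem_cons.mp hqd with h | h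
    · subst h; exact ⟨hdcol, hmp⟩
    · exact hD'col qd h
  · have h1 : (3:ℕ) ^ (m.val + 1) ≤ 3 ^ M := Nat.pow_le_pow_right (by norm_num) hMm
    have h2 : (3:ℕ) ^ (m.val + 1) = 3 * 3 ^ m.val := by ring
    simp only [List.map_cons, List.sum_cons]
    omega
  · simp only [List.map_cons, List.sum_cons]
    rw [hD'sq, hdd]
    exact (T.peel_sq (le_of_lt hmp) hv hx hmax (ne_of_gt hbsq_pos) hxx).symm

end PeelRec

section ListHelp
set_option linter.unusedSectionVars false
variable {α : Type*}

lemma lsum_add (l : List α) (f g : α → A) :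
    (l.map (fun v => f v + g v)).sum = (l.map f).sum + (l.map g).sum := by
  induction l with
  | nil => simp
  | cons a l ih => simp [ih]; abel

lemma lsum_sub (l : List α) (f g : α → A) :
    (l.map (fun v => f v - g v)).sum = (l.map f).sum - (l.map g).sum := by
  induction l with
  | nil => simp
  | cons a l ih => simp [ih]; abel

lemma lsum_smul_const (l : List α) (f : α → ℝ) (X : A) :
    (l.map (fun v => f v • X)).sum = (l.map f).sum • X := by
  induction l with
  | nil => simp
  | cons a l ih => simp [ih, add_smul]

lemma lsum_mull (l : List α) (h : α → A) (y : A) :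
    (l.map (fun v => T.mul (h v) y)).sum = T.mul ((l.map h).sum) y := by
  induction l with
  | nil => simp
  | cons a l ih => simp [ih, map_add, LinearMap.add_apply]

lemma lsum_mulr (l : List α) (h : α → A) (y : A) :
    (l.map (fun v => T.mul y (h v))).sum = T.mul y ((l.map h).sum) := by
  induction l with
  | nil => simp
  | cons a l ih => simp [ih, map_add]

lemma lsum_conj (l : List α) (h : α → A) :
    (l.map (fun v => T.conj (h v))).sum = T.conj ((l.map h).sum) := by
  induction l with
  | nil => simp
  | cons a l ih => simp [ih, map_add]

end ListHelp

section Merge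

/-- The merging identity: a collection of columns at the same position can be traded
for the single combined column `d` plus remainders with zero diagonal entry. -/
lemma merge_sq (l : List A) (g : A → ℝ) (d : A)
    (hd : (l.map (fun v => g v • v)).sum = d)
    (hg : (l.map (fun v => g v * g v)).sum = 1) :
    (l.map (fun v => T.mul v (T.conj v))).sum
      = T.mul d (T.conj d)
        + (l.map (fun v => T.mul (v - g v • d) (T.conj (v - g v • d)))).sum := by
  have expand : ∀ v, T.mul (v - g v • d) (T.conj (v - g v • d))
      = T.mul v (T.conj v) - T.mul (g v • v) (T.conj d)
        - T.mul d (T.conj (g v • v)) + (g v * g v) • T.mul d (T.conj d) := by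
    intro v
    simp only [map_sub, map_smul, LinearMap.sub_apply, LinearMap.smul_apply,
      smul_sub, smul_smul]
    abel
  have hmap : (l.map (fun v => T.mul (v - g v • d) (T.conj (v - g v • d))))
      = l.map (fun v => T.mul v (T.conj v) - T.mul (g v • v) (T.conj d)
        - T.mul d (T.conj (g v • v)) + (g v * g v) • T.mul d (T.conj d)) :=
    List.map_congr_left (fun v _ => expand v)
  rw [hmap, lsum_add, lsum_sub, lsum_sub, T.lsum_mull, T.lsum_mulr,
    T.lsum_conj, lsum_smul_const, hd, hg, one_smul]
  abel

end Merge

section PeelList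

lemma peel_list : ∀ l : List (Fin r × A),
    (∀ pv ∈ l, T.IsCol pv.1 pv.2 ∧ T.c pv.2 pv.1 pv.1 = 0) →
    ∃ D : List (Fin r × A),
      (∀ qd ∈ D, T.IsCol qd.1 qd.2 ∧ ∃ pv ∈ l, qd.1 < pv.1) ∧
      (D.map (fun qd => 3 ^ qd.1.val)).sum + l.length
        ≤ (l.map (fun pv => 3 ^ pv.1.val)).sum ∧
      (D.map (fun qd => T.mul qd.2 (T.conj qd.2))).sum
        = (l.map (fun pv => T.mul pv.2 (T.conj pv.2))).sum := by
  intro l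
  induction l with
  | nil => exact fun _ => ⟨[], by simp, by simp, by simp⟩
  | cons pv l ih =>
    intro hl
    obtain ⟨hcol, hdiag⟩ := hl pv (List.mem_cons_self)
    have hrows : ∀ i : Fin r, pv.1.val ≤ i.val → T.c pv.2 i pv.1 = 0 := by
      intro i hi
      rcases lt_or_eq_of_le hi with h | h
      · exact hcol.2 i h
      · have : i = pv.1 := Fin.ext h.symm
        rw [this]; exact hdiag
    obtain ⟨D₀, hD₀col, hD₀meas, hD₀sq⟩ := T.peel pv.1.val pv.1 pv.2 hcol hdiag hrows
    obtain ⟨D₁, hD₁col, hD₁meas, hD₁sq⟩ := ih (fun qv hqv => hl qv (List.mem_cons_of_mem pv hqv))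
    refine ⟨D₀ ++ D₁, ?_, ?_, ?_⟩
    · intro qd hqd
      rcases List.mem_append.mp hqd with h | h
      · exact ⟨(hD₀col qd h).1, pv, List.mem_cons_self, (hD₀col qd h).2⟩
      · obtain ⟨h1, pv', hpv', h2⟩ := hD₁col qd h
        exact ⟨h1, pv', List.mem_cons_of_mem pv hpv', h2⟩
    · simp only [List.map_append, List.sum_append, List.length_cons, List.map_cons,
        List.sum_cons]
      omega
    · simp only [List.map_append, List.sum_append, List.map_cons, List.sum_cons]
      rw [hD₀sq, hD₁sq]

end PeelList

section MainRec

omit [AddCommGroup A] [Module ℝ A] in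
lemma sq_sum_zero : ∀ (l : List A) (f : A → ℝ),
    (l.map (fun v => f v * f v)).sum = 0 → ∀ v ∈ l, f v = 0 := by
  intro l f
  induction l with
  | nil => intro _ v hv; simp at hv
  | cons a l ih =>
    intro h v hv
    simp only [List.map_cons, List.sum_cons] at h
    have h1 : 0 ≤ f a * f a := mul_self_nonneg _
    have h2 : 0 ≤ (l.map (fun v => f v * f v)).sum :=
      List.sum_nonneg (by
        intro x hx
        obtain ⟨y, _, rfl⟩ := List.mem_map.mp hx
        exact mul_self_nonneg _)
    rcases List.mem_cons.mp hv with rfl | hv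
    · nlinarith
    · exact ih (by linarith) v hv

lemma isCol_lsum {p : Fin r} : ∀ (l : List A), (∀ v ∈ l, T.IsCol p v) → T.IsCol p l.sum := by
  intro l
  induction l with
  | nil => intro _; simpa using T.isCol_zero p
  | cons a l ih =>
    intro h
    rw [List.sum_cons]
    exact T.isCol_add (h a (List.mem_cons_self)) (ih fun v hv => h v (List.mem_cons_of_mem a hv))

lemma c_lsum (i j : Fin r) : ∀ (l : List A), T.c l.sum i j = (l.map (fun z => T.c z i j)).sum := by
  intro l
  induction l with
  | nil => simpa using T.c_zero i j
  | cons a l ih => simp [T.c_add, ih]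

lemma main : ∀ (N : ℕ) (L : List (Fin r × A)),
    (L.map (fun pv => 3 ^ pv.1.val)).sum ≤ N →
    (∀ pv ∈ L, T.IsCol pv.1 pv.2) →
    ∃ t : A, T.UpperTriangular t ∧ (∀ i, 0 ≤ T.ρ i t) ∧
      (∀ i j : Fin r, T.c t i j ≠ 0 → ∃ pv ∈ L, j ≤ pv.1) ∧
      T.mul t (T.conj t) = (L.map (fun pv => T.mul pv.2 (T.conj pv.2))).sum := by
  intro N
  induction N using Nat.strong_induction_on with
  | _ N ih =>
  intro L hN hLcol
  by_cases hL0 : L = []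
  · subst hL0
    refine ⟨0, fun i j _ => T.c_zero i j, fun i => le_of_eq (T.rho_zero i).symm,
      fun i j h => absurd (T.c_zero i j) h, ?_⟩
    simp
  classical
  -- the maximal position
  have hPne : (L.map Prod.fst) ≠ [] := by simpa using hL0
  have hPfne : (L.map Prod.fst).toFinset.Nonempty := by
    simp [List.toFinset_nonempty_iff, hPne]
  set n₀ : Fin r := (L.map Prod.fst).toFinset.max' hPfne with hn₀def
  have hn₀mem : ∃ pv ∈ L, pv.1 = n₀ := by
    have := (L.map Prod.fst).toFinset.max'_mem hPfne
    rw [List.mem_toFinset] at this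
    obtain ⟨pv, hpv, h⟩ := List.mem_map.mp this
    exact ⟨pv, hpv, h⟩
  have hle : ∀ pv ∈ L, pv.1 ≤ n₀ := by
    intro pv hpv
    exact (L.map Prod.fst).toFinset.le_max' _ (List.mem_toFinset.mpr (List.mem_map.mpr ⟨pv, hpv, rfl⟩))
  -- partition
  set L₀ : List (Fin r × A) := L.filter (fun pv => decide (pv.1 = n₀)) with hL₀def
  set L₁ : List (Fin r × A) := L.filter (fun pv => !decide (pv.1 = n₀)) with hL₁def
  have hperm : List.Perm (L₀ ++ L₁) L := List.filter_append_perm _ L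
  have hmemL₀ : ∀ pv, pv ∈ L₀ ↔ pv ∈ L ∧ pv.1 = n₀ := by
    intro pv; rw [hL₀def]
    constructor
    · intro h; simpa using List.mem_filter.mp h
    · intro h; exact List.mem_filter.mpr (by simpa using h)
  have hmemL₁ : ∀ pv, pv ∈ L₁ ↔ pv ∈ L ∧ ¬ pv.1 = n₀ := by
    intro pv; rw [hL₁def]
    constructor
    · intro h; simpa using List.mem_filter.mp h
    · intro h; exact List.mem_filter.mpr (by simpa using h)
  have hL₁lt : ∀ pv ∈ L₁, pv.1 < n₀ := by
    intro pv hpv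
    obtain ⟨h1, h2⟩ := (hmemL₁ pv).mp hpv
    exact lt_of_le_of_ne (hle pv h1) h2
  have hL₀ne : L₀ ≠ [] := by
    obtain ⟨pv, hpv, h⟩ := hn₀mem
    exact List.ne_nil_of_mem ((hmemL₀ pv).mpr ⟨hpv, h⟩)
  have hsplit : ∀ (f : (Fin r × A) → ℕ),
      (L.map f).sum = (L₀.map f).sum + (L₁.map f).sum := by
    intro f
    rw [← (hperm.map f).sum_eq, List.map_append, List.sum_append]
  have hsplitA : ∀ (f : (Fin r × A) → A),
      (L.map f).sum = (L₀.map f).sum + (L₁.map f).sum := by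
    intro f
    rw [← (hperm.map f).sum_eq, List.map_append, List.sum_append]
  have hmeasL₀ : (L₀.map (fun pv => 3 ^ pv.1.val)).sum = L₀.length * 3 ^ n₀.val := by
    have hcongr : L₀.map (fun pv => 3 ^ pv.1.val) = L₀.map (fun _ => 3 ^ n₀.val) :=
      List.map_congr_left (fun pv hpv => by rw [((hmemL₀ pv).mp hpv).2])
    rw [hcongr]
    simp [List.map_const', List.sum_replicate, Nat.smul_one_eq_cast]
  set l₀ : List A := L₀.map Prod.snd with hl₀def
  have hl₀len : l₀.length = L₀.length := List.length_map _
  have hl₀ne : l₀ ≠ [] := by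
    simpa [hl₀def] using hL₀ne
  have hl₀col : ∀ v ∈ l₀, T.IsCol n₀ v := by
    intro v hv
    obtain ⟨pv, hpv, rfl⟩ := List.mem_map.mp hv
    have := hLcol pv ((hmemL₀ pv).mp hpv).1
    rwa [((hmemL₀ pv).mp hpv).2] at this
  have hsqL₀ : (L₀.map (fun pv => T.mul pv.2 (T.conj pv.2))).sum
      = (l₀.map (fun v => T.mul v (T.conj v))).sum := by
    rw [hl₀def, List.map_map]
    rfl
  set gsq : ℝ := (l₀.map (fun v => T.ρ n₀ v * T.ρ n₀ v)).sum with hgsqdef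
  by_cases hg0 : gsq = 0
  · -- all diagonal entries vanish: peel all the columns downwards
    have hdiag0 : ∀ v ∈ l₀, T.c v n₀ n₀ = 0 := by
      intro v hv
      rw [T.diag_coord, sq_sum_zero l₀ (fun v => T.ρ n₀ v) hg0 v hv, zero_smul]
    obtain ⟨D, hDcol, hDmeas, hDsq⟩ := T.peel_list L₀ (by
      intro pv hpv
      have h1 := ((hmemL₀ pv).mp hpv).2
      refine ⟨by rw [h1]; exact hl₀col pv.2 (List.mem_map.mpr ⟨pv, hpv, rfl⟩), ?_⟩
      rw [h1]
      exact hdiag0 pv.2 (List.mem_map.mpr ⟨pv, hpv, rfl⟩))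
    set newL := L₁ ++ D with hnewLdef
    have hnewLcol : ∀ pv ∈ newL, T.IsCol pv.1 pv.2 := by
      intro pv hpv
      rcases List.mem_append.mp hpv with h | h
      · exact hLcol pv ((hmemL₁ pv).mp h).1
      · exact (hDcol pv h).1
    have hmeasnew : (newL.map (fun pv => 3 ^ pv.1.val)).sum + L₀.length
        ≤ (L.map (fun pv => 3 ^ pv.1.val)).sum := by
      rw [hnewLdef, List.map_append, List.sum_append, hsplit]
      have := hDmeas
      omega
    have hlen : 1 ≤ L₀.length := List.length_pos_iff.mpr hL₀ne
    obtain ⟨t, ht1, ht2, ht3, ht4⟩ := ih ((newL.map (fun pv => 3 ^ pv.1.val)).sum)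
      (by omega) newL (le_refl _) hnewLcol
    refine ⟨t, ht1, ht2, ?_, ?_⟩
    · intro i j h
      obtain ⟨pv, hpv, hj⟩ := ht3 i j h
      rcases List.mem_append.mp hpv with h' | h'
      · exact ⟨pv, ((hmemL₁ pv).mp h').1, hj⟩
      · obtain ⟨qv, hqv, hlt⟩ := (hDcol pv h').2
        exact ⟨qv, ((hmemL₀ qv).mp hqv).1, le_trans hj (le_of_lt hlt)⟩
    · rw [ht4, hnewLdef, List.map_append, List.sum_append, hsplitA, hDsq]
      abel
  · -- positive combined diagonal: merge into one column, peel remainders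
    have hgsq_nonneg : 0 ≤ gsq := List.sum_nonneg (by
      intro x hx
      obtain ⟨y, _, rfl⟩ := List.mem_map.mp hx
      exact mul_self_nonneg _)
    have hgsq_pos : 0 < gsq := lt_of_le_of_ne hgsq_nonneg (Ne.symm hg0)
    set γ := Real.sqrt gsq with hγdef
    have hγpos : 0 < γ := Real.sqrt_pos.mpr hgsq_pos
    have hγγ : γ * γ = gsq := Real.mul_self_sqrt hgsq_pos.le
    set g : A → ℝ := fun v => T.ρ n₀ v / γ with hgdef
    set d : A := (l₀.map (fun v => g v • v)).sum with hddef
    have hg1 : (l₀.map (fun v => g v * g v)).sum = 1 := by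
      have hcongr : l₀.map (fun v => g v * g v)
          = l₀.map (fun v => (T.ρ n₀ v * T.ρ n₀ v) • gsq⁻¹) := by
        refine List.map_congr_left (fun v _ => ?_)
        rw [hgdef]
        simp only [smul_eq_mul]
        rw [← hγγ]
        field_simp
      rw [hcongr, lsum_smul_const, ← hgsqdef, smul_eq_mul,
        mul_inv_cancel₀ (ne_of_gt hgsq_pos)]
    have hdcol : T.IsCol n₀ d := by
      rw [hddef]
      refine T.isCol_lsum _ ?_
      intro v hv
      obtain ⟨w, hw, rfl⟩ := List.mem_map.mp hv
      exact T.isCol_smul _ (hl₀col w hw)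
    have hsumgr : (l₀.map (fun v => g v * T.ρ n₀ v)).sum = γ := by
      have hcongr2 : l₀.map (fun v => g v * T.ρ n₀ v)
          = l₀.map (fun v => (T.ρ n₀ v * T.ρ n₀ v) • γ⁻¹) := by
        refine List.map_congr_left (fun v _ => ?_)
        rw [hgdef]
        simp only [smul_eq_mul]
        field_simp
      rw [hcongr2, lsum_smul_const, ← hgsqdef, smul_eq_mul, ← hγγ]
      field_simp
    have hcd : T.c d n₀ n₀ = γ • T.e n₀ := by
      rw [hddef, T.c_lsum, List.map_map]
      have hcongr3 : (fun z => T.c z n₀ n₀) ∘ (fun v => g v • v)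
          = fun v => (g v * T.ρ n₀ v) • T.e n₀ := by
        funext v
        simp only [Function.comp_apply]
        rw [T.c_smul, T.diag_coord, smul_smul]
      rw [hcongr3, lsum_smul_const, hsumgr]
    have hrhod : T.ρ n₀ d = γ := T.smul_e_inj n₀ (by rw [← T.diag_coord, hcd])
    have hrhod0 : ∀ i, i ≠ n₀ → T.ρ i d = 0 := fun i hi =>
      T.rho_eq_zero_of_c (hdcol.1 i i hi)
    set lr : List (Fin r × A) := l₀.map (fun v => (n₀, v - g v • d)) with hlrdef
    have hlrcond : ∀ pv ∈ lr, T.IsCol pv.1 pv.2 ∧ T.c pv.2 pv.1 pv.1 = 0 := by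
      intro pv hpv
      obtain ⟨v, hv, rfl⟩ := List.mem_map.mp hpv
      refine ⟨T.isCol_sub (hl₀col v hv) (T.isCol_smul _ hdcol), ?_⟩
      simp only
      rw [T.c_sub, T.diag_coord, T.c_smul, hcd, smul_smul]
      rw [show g v * γ = T.ρ n₀ v by rw [hgdef]; exact div_mul_cancel₀ _ (ne_of_gt hγpos)]
      simp
    obtain ⟨D, hDcol, hDmeas, hDsq⟩ := T.peel_list lr hlrcond
    have hDlt : ∀ qd ∈ D, qd.1 < n₀ := by
      intro qd h
      obtain ⟨_, pv, hpv, hlt⟩ := hDcol qd h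
      obtain ⟨v, hv, rfl⟩ := List.mem_map.mp hpv
      exact hlt
    have hmeaslr : (lr.map (fun pv => 3 ^ pv.1.val)).sum = L₀.length * 3 ^ n₀.val := by
      rw [hlrdef, List.map_map]
      have : ((fun pv : Fin r × A => 3 ^ pv.1.val) ∘ (fun v => (n₀, v - g v • d)))
          = fun _ : A => 3 ^ n₀.val := rfl
      rw [this]
      simp [List.map_const', List.sum_replicate, Nat.smul_one_eq_cast, hl₀len]
    have hlrlen : lr.length = L₀.length := by rw [hlrdef, List.length_map, hl₀len]
    set newL := L₁ ++ D with hnewLdef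
    have hnewLcol : ∀ pv ∈ newL, T.IsCol pv.1 pv.2 := by
      intro pv hpv
      rcases List.mem_append.mp hpv with h | h
      · exact hLcol pv ((hmemL₁ pv).mp h).1
      · exact (hDcol pv h).1
    have hnewLlt : ∀ pv ∈ newL, pv.1 < n₀ := by
      intro pv hpv
      rcases List.mem_append.mp hpv with h | h
      · exact hL₁lt pv h
      · exact hDlt pv h
    have hlen : 1 ≤ L₀.length := List.length_pos_iff.mpr hL₀ne
    have hmeasnew : (newL.map (fun pv => 3 ^ pv.1.val)).sum + L₀.length
        ≤ (L.map (fun pv => 3 ^ pv.1.val)).sum := by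
      rw [hnewLdef, List.map_append, List.sum_append, hsplit]
      rw [hmeaslr, hlrlen] at hDmeas
      rw [hmeasL₀]
      omega
    obtain ⟨t₁, ht1, ht2, ht3, ht4⟩ := ih ((newL.map (fun pv => 3 ^ pv.1.val)).sum)
      (by omega) newL (le_refl _) hnewLcol
    have ht₁coln₀ : ∀ k, T.c t₁ k n₀ = 0 := by
      intro k
      by_contra h
      obtain ⟨pv, hpv, hje⟩ := ht3 k n₀ h
      exact absurd hje (not_le.mpr (hnewLlt pv hpv))
    have hcross1 : T.mul d (T.conj t₁) = 0 := T.col_mul_conj_zerocol hdcol ht₁coln₀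
    have hcross2 : T.mul t₁ (T.conj d) = 0 := T.zerocol_mul_conj_col hdcol ht₁coln₀
    obtain ⟨pvw, hpvw, hpvw1⟩ := hn₀mem
    refine ⟨d + t₁, ?_, ?_, ?_, ?_⟩
    · intro i j hji
      rw [T.c_add, ht1 i j hji, add_zero]
      by_cases hj : j = n₀
      · subst hj; exact hdcol.2 i hji
      · exact hdcol.1 i j hj
    · intro i
      rw [T.rho_add]
      by_cases hi : i = n₀
      · subst hi
        rw [hrhod]
        linarith [hγpos.le, ht2 n₀]
      · rw [hrhod0 i hi, zero_add]
        exact ht2 i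
    · intro i j h
      by_cases hd0 : T.c d i j = 0
      · have ht0 : T.c t₁ i j ≠ 0 := by
          intro h0
          rw [T.c_add, hd0, h0, add_zero] at h
          exact h rfl
        obtain ⟨pv, hpv, hje⟩ := ht3 i j ht0
        rcases List.mem_append.mp hpv with h' | h'
        · exact ⟨pv, ((hmemL₁ pv).mp h').1, hje⟩
        · exact ⟨pvw, hpvw, by rw [hpvw1]; exact le_of_lt (lt_of_le_of_lt hje (hDlt pv h'))⟩
      · have hj : j = n₀ := by
          by_contra hj
          exact hd0 (hdcol.1 i j hj)
        exact ⟨pvw, hpvw, by rw [hpvw1, hj]⟩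
    · have hexp : T.mul (d + t₁) (T.conj (d + t₁))
          = T.mul d (T.conj d) + T.mul d (T.conj t₁) + T.mul t₁ (T.conj d)
            + T.mul t₁ (T.conj t₁) := by
        simp only [map_add, LinearMap.add_apply]
        abel
      rw [hexp, hcross1, hcross2, ht4, hnewLdef, List.map_append, List.sum_append,
        hsplitA, hsqL₀, hDsq]
      have hDsq2 : (lr.map (fun pv => T.mul pv.2 (T.conj pv.2))).sum
          = (l₀.map (fun v => T.mul (v - g v • d) (T.conj (v - g v • d)))).sum := by
        rw [hlrdef, List.map_map]
        rfl
      rw [hDsq2]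
      have hmerge := T.merge_sq l₀ g d hddef.symm hg1
      rw [hmerge]
      abel

end MainRec

section Last
variable {T' : TAlgebra A (r + 1)}

lemma inner_e_last (T : TAlgebra A (r + 1)) {t : A} (ht : T.UpperTriangular t) :
    T.inner' (T.mul t (T.conj t)) (T.e (Fin.last r))
      = T.ρ (Fin.last r) t * T.ρ (Fin.last r) t := by
  set lst := Fin.last r with hlst
  have hce : ∀ j k, T.c (T.e lst) j k
      = if j = lst then (if k = lst then T.e lst else 0) else 0 :=
    fun j k => T.c_of_mem (T.e_mem lst) j k
  have hclaim1 : T.mul (T.conj t) (T.e lst) = T.ρ lst t • T.e lst := by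
    refine T.eq_of_c_eq fun i k => ?_
    rw [T.c_mul, T.c_smul, hce]
    rw [Finset.sum_eq_single lst (fun j _ hj => by rw [hce, if_neg hj]; simp) (by simp)]
    rw [hce, if_pos rfl, T.c_conj]
    by_cases hi : i = lst
    · subst hi
      rw [T.diag_coord, map_smul, T.conj_e]
      by_cases hk : k = lst
      · simp [hk, LinearMap.map_smul₂, T.e_idem]
      · simp [hk]
    · have hil : i < lst := lt_of_le_of_ne (Fin.le_last i) hi
      rw [ht lst i hil]
      simp [hi]
  have hclaim2 : T.tr (T.mul t (T.e lst)) = T.ρ lst t := by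
    have hcz : ∀ i k, T.c (T.mul t (T.e lst)) i k
        = if k = lst then T.mul (T.c t i lst) (T.e lst) else 0 := by
      intro i k
      rw [T.c_mul]
      rw [Finset.sum_eq_single lst (fun j _ hj => by rw [hce, if_neg hj]; simp) (by simp)]
      rw [hce, if_pos rfl]
      by_cases hk : k = lst
      · rw [if_pos hk, if_pos hk]
      · rw [if_neg hk, if_neg hk]
        simp
    rw [tr, Finset.sum_eq_single lst]
    · apply T.smul_e_inj lst
      rw [← T.diag_coord, hcz, if_pos rfl, T.diag_coord]
      simp only [LinearMap.map_smul₂, LinearMap.smul_apply, T.e_idem]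
    · intro i _ hi
      apply T.rho_eq_zero_of_c
      rw [hcz, if_neg hi]
    · simp
  rw [inner', T.conj_e, T.trA, hclaim1, map_smul, T.tr_smul', hclaim2]

end Last

end TAlgebra

/-- In a T-algebra `A` of rank `r+1`, the face of the closed homogeneous cone `cl C(A)`
exposed by `e_r` (the last diagonal idempotent), namely `cl C(A) ∩ {e_r}^⊥`, equals the
closed homogeneous cone of the principal subalgebra obtained by deleting the last row and
column. -/
theorem stmt13 {A : Type*} [AddCommGroup A] [Module ℝ A] {r : ℕ} (T : TAlgebra A (r + 1)) :
    T.clCone ∩ {x | T.inner' x (T.e (Fin.last r)) = 0} =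
      {x | ∃ t ∈ T.Tplus,
        (∀ k : Fin (r + 1), T.c t (Fin.last r) k = 0 ∧ T.c t k (Fin.last r) = 0) ∧
        x = T.mul t (T.conj t)} := by
  classical
  ext x
  simp only [Set.mem_inter_iff, Set.mem_setOf_eq, TAlgebra.clCone]
  constructor
  · rintro ⟨⟨t, ht, rfl⟩, hinner⟩
    obtain ⟨htri, hpos⟩ := ht
    have hrho : T.ρ (Fin.last r) t = 0 := by
      rw [T.inner_e_last htri] at hinner
      exact mul_self_eq_zero.mp hinner
    -- decompose `t` into its columns
    set v : Fin (r + 1) → A := fun j => ∑ i, T.c t i j with hvdef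
    have hvc : ∀ j i l, T.c (v j) i l = if l = j then T.c t i j else 0 :=
      fun j i l => T.c_sum_pieces (fun i => T.c_mem t i j) i l
    have hvcol : ∀ j, T.IsCol j (v j) :=
      fun j => T.isCol_of_pieces (fun i => T.c_mem t i j) (fun i hi => htri i j hi)
    have ht_eq : t = ∑ j, v j := by
      conv_lhs => rw [← T.c_sum t]
      rw [Finset.sum_comm]
    have hsq : T.mul t (T.conj t) = ∑ j, T.mul (v j) (T.conj (v j)) := by
      have h1 : T.mul t (T.conj t) = ∑ j, ∑ k, T.mul (v j) (T.conj (v k)) := by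
        conv_lhs => rw [ht_eq]
        rw [T.mul_sum_left]
        refine Finset.sum_congr rfl fun j _ => ?_
        rw [T.conj_sum, T.mul_sum_right]
      rw [h1]
      refine Finset.sum_congr rfl fun j _ => ?_
      rw [Finset.sum_eq_single j
        (fun k _ hk => T.col_mul_conj_col (hvcol j) (hvcol k) (Ne.symm hk)) (by simp)]
    -- peel the last column
    have hvlastdiag : T.c (v (Fin.last r)) (Fin.last r) (Fin.last r) = 0 := by
      rw [hvc, if_pos rfl, T.diag_coord, hrho, zero_smul]
    obtain ⟨D, hDcol, _, hDsq⟩ := T.peel_list [(Fin.last r, v (Fin.last r))]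
      (by
        rintro pv hpv
        rw [List.mem_singleton] at hpv
        subst hpv
        exact ⟨hvcol _, hvlastdiag⟩)
    have hDlt : ∀ qd ∈ D, qd.1 < Fin.last r := by
      intro qd h
      obtain ⟨_, pv, hpv, hlt⟩ := hDcol qd h
      rw [List.mem_singleton] at hpv
      subst hpv
      exact hlt
    set L : List (Fin (r + 1) × A) :=
      ((Finset.univ.erase (Fin.last r)).toList.map (fun j => (j, v j))) ++ D with hLdef
    have hLcol : ∀ pv ∈ L, T.IsCol pv.1 pv.2 := by
      intro pv hpv
      rcases List.mem_append.mp hpv with h | h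
      · obtain ⟨j, _, rfl⟩ := List.mem_map.mp h
        exact hvcol j
      · exact (hDcol pv h).1
    have hLlt : ∀ pv ∈ L, pv.1 < Fin.last r := by
      intro pv hpv
      rcases List.mem_append.mp hpv with h | h
      · obtain ⟨j, hj, rfl⟩ := List.mem_map.mp h
        have hj2 : j ≠ Fin.last r := (Finset.mem_erase.mp (Finset.mem_toList.mp hj)).1
        exact lt_of_le_of_ne (Fin.le_last j) hj2
      · exact hDlt pv h
    obtain ⟨t', h1, h2, h3, h4⟩ := T.main ((L.map (fun pv => 3 ^ pv.1.val)).sum) L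
      (le_refl _) hLcol
    have hcol0 : ∀ k, T.c t' k (Fin.last r) = 0 := by
      intro k
      by_contra h
      obtain ⟨pv, hpv, hle2⟩ := h3 k (Fin.last r) h
      exact absurd hle2 (not_le.mpr (hLlt pv hpv))
    have hrow0 : ∀ k, T.c t' (Fin.last r) k = 0 := by
      intro k
      rcases lt_or_eq_of_le (Fin.le_last k) with hk | hk
      · exact h1 (Fin.last r) k hk
      · rw [hk]; exact hcol0 (Fin.last r)
    refine ⟨t', ⟨h1, h2⟩, fun k => ⟨hrow0 k, hcol0 k⟩, ?_⟩
    rw [h4, hLdef, List.map_append, List.sum_append, List.map_map]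
    have hcomp : ((fun pv : Fin (r + 1) × A => T.mul pv.2 (T.conj pv.2))
        ∘ (fun j => (j, v j))) = fun j => T.mul (v j) (T.conj (v j)) := rfl
    rw [hcomp, Finset.sum_map_toList, hDsq]
    simp only [List.map_cons, List.map_nil, List.sum_cons, List.sum_nil, add_zero]
    rw [Finset.sum_erase_add Finset.univ _ (Finset.mem_univ (Fin.last r)), hsq]
  · rintro ⟨t, ht, hzero, rfl⟩
    refine ⟨⟨t, ht, rfl⟩, ?_⟩
    rw [T.inner_e_last ht.1]
    rw [T.rho_eq_zero_of_c (hzero (Fin.last r)).1, mul_zero]
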